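/- A nondegenerate CSBP Z with branching mechanism ψ is absorbed at 0 in finite time with positive probability, i.e. P(∃ t > 0: Z_t = 0) > 0, if and only if ∫^∞ dx/ψ(x) < ∞. -/

import Mathlib

/-!
Since `P_z(Z_t = 0) = lim_{λ → ∞} exp (-z u_t(λ))` and `u_t` is nondecreasing in `λ`, absorption
before time `t` has positive probability iff `λ ↦ u_t(λ)` is bounded. The branching mechanism `ψ`
is convex with `ψ 0 = 0`, so `ψ v / v` is nondecreasing and `ψ` stays positive beyond any point
where it is positive. Along a trajectory of `∂ₜu = -ψ(u)` that stays where `ψ > 0`, the change of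
variables `v = u_s(λ)` shows that descending from `λ` to `v` takes time `∫_v^λ dx / ψ(x)`.
If `u_t` is bounded, every trajectory descends to a level `v` with `ψ v > 0` before time `t`, so
`∫_v^∞ dx / ψ(x) ≤ t`. Conversely, if `∫_b^∞ dx / ψ(x) < ∞` with `ψ > 0` on `[b, ∞)`, every
trajectory is below `b` by time `t = 1 + ∫_b^∞ dx / ψ(x)` and cannot cross `b` upwards.
Nondegeneracy excludes `ψ ≡ 0` on `[0, ∞)`, for which `(ψ x)⁻¹ = 0` would be integrable; if `ψ ≤ 0`
and `ψ ≢ 0`, then `ψ < 0` and `|ψ x| ≤ C x`, so `1 / ψ` is not integrable at infinity.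
-/

open MeasureTheory Filter Set Real Topology

lemma exp_neg_sub_one_add_nonneg (x : ℝ) : 0 ≤ exp (-x) - 1 + x := by
  linarith [add_one_le_exp (-x)]

lemma exp_neg_sub_one_add_le_min {x : ℝ} (hx : 0 ≤ x) : exp (-x) - 1 + x ≤ min x (x ^ 2) := by
  refine le_min (by linarith [exp_le_one_iff.2 (neg_nonpos.2 hx)]) ?_
  rcases le_total x 1 with hx1 | hx1
  · have := Real.abs_exp_sub_one_sub_id_le (x := -x) (by rwa [abs_neg, abs_of_nonneg hx])
    linarith [(abs_le.1 this).2, neg_sq x]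
  · nlinarith [exp_le_one_iff.2 (neg_nonpos.2 hx)]

lemma exp_neg_mul_sub_one_add_le {lam h : ℝ} (hlam : 0 ≤ lam) (hh : 0 ≤ h) :
    exp (-lam * h) - 1 + lam * h ≤ (lam + lam ^ 2) * min h (h ^ 2) := by
  rw [mul_min_of_nonneg _ _ (by positivity), neg_mul]
  refine (exp_neg_sub_one_add_le_min (mul_nonneg hlam hh)).trans (min_le_min ?_ ?_)
  · nlinarith [mul_nonneg (sq_nonneg lam) hh]
  · nlinarith [mul_nonneg hlam (sq_nonneg h), mul_nonneg (sq_nonneg lam) (sq_nonneg h)]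

section BranchingMechanism

variable {μ : Measure ℝ}

lemma integrableOn_min_sq_of_lintegral_ne_top
    (hmom : ∫⁻ h in Ioi (0 : ℝ), ENNReal.ofReal (min h (h ^ 2)) ∂μ ≠ ⊤) :
    IntegrableOn (fun h => min h (h ^ 2)) (Ioi 0) μ := by
  refine ⟨(continuous_id.min (continuous_pow 2)).aestronglyMeasurable, ?_⟩
  rw [hasFiniteIntegral_iff_ofReal]
  · exact hmom.lt_top
  · filter_upwards [ae_restrict_mem measurableSet_Ioi] with h hh
    exact le_min (le_of_lt hh) (sq_nonneg h)

lemma integrableOn_exp_neg_mul_sub_one_add (hμ : IntegrableOn (fun h => min h (h ^ 2)) (Ioi 0) μ)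
    {lam : ℝ} (hlam : 0 ≤ lam) :
    IntegrableOn (fun h => exp (-lam * h) - 1 + lam * h) (Ioi 0) μ := by
  refine (hμ.const_mul (lam + lam ^ 2)).mono' (by fun_prop) ?_
  filter_upwards [ae_restrict_mem measurableSet_Ioi] with h hh
  rw [norm_of_nonneg (by simpa [neg_mul] using exp_neg_sub_one_add_nonneg (lam * h))]
  exact exp_neg_mul_sub_one_add_le hlam (le_of_lt hh)

lemma one_sub_exp_neg_sq (h : ℝ) :
    (1 - exp (-h)) ^ 2 = (exp (-2 * h) - 1 + 2 * h) - 2 * (exp (-1 * h) - 1 + 1 * h) := by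
  rw [show -2 * h = -h + -h by ring, exp_add]
  ring_nf

lemma convexOn_integral {α E : Type*} [MeasurableSpace α] {ν : Measure α} [AddCommGroup E]
    [Module ℝ E] {s : Set E} {f : E → α → ℝ} (hs : Convex ℝ s) (hf : ∀ h, ConvexOn ℝ s (f · h))
    (hfi : ∀ x ∈ s, Integrable (f x) ν) : ConvexOn ℝ s (fun x => ∫ h, f x h ∂ν) := by
  refine ⟨hs, fun x hx y hy a b ha hb hab => ?_⟩
  calc ∫ h, f (a • x + b • y) h ∂ν ≤ ∫ h, (a * f x h + b * f y h) ∂ν :=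
        integral_mono (hfi _ (hs hx hy ha hb hab)) (((hfi x hx).const_mul a).add
          ((hfi y hy).const_mul b)) fun h => (hf h).2 hx hy ha hb hab
    _ = a • ∫ h, f x h ∂ν + b • ∫ h, f y h ∂ν := by
        rw [integral_add ((hfi x hx).const_mul a) ((hfi y hy).const_mul b), integral_const_mul,
          integral_const_mul, smul_eq_mul, smul_eq_mul]

lemma convexOn_exp_neg_mul_sub_one_add (h : ℝ) :
    ConvexOn ℝ univ (fun lam => exp (-lam * h) - 1 + lam * h) := by
  refine ⟨convex_univ, fun x _ y _ a b ha hb hab => ?_⟩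
  have hexp := convexOn_exp.2 (mem_univ (-x * h)) (mem_univ (-y * h)) ha hb hab
  simp only [smul_eq_mul] at hexp ⊢
  rw [show -(a * x + b * y) * h = a * (-x * h) + b * (-y * h) by ring]
  linear_combination hexp + hab

noncomputable def branchingMechanism (r γ : ℝ) (μ : Measure ℝ) (lam : ℝ) : ℝ :=
  -r * lam + γ * lam ^ 2 + ∫ h in Ioi (0 : ℝ), (exp (-lam * h) - 1 + lam * h) ∂μ

namespace branchingMechanism

variable {r γ : ℝ}

lemma apply_zero : branchingMechanism r γ μ 0 = 0 := by
  simp [branchingMechanism]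

lemma convexOn (hγ : 0 ≤ γ) (hμ : IntegrableOn (fun h => min h (h ^ 2)) (Ioi 0) μ) :
    ConvexOn ℝ (Ici 0) (branchingMechanism r γ μ) := by
  have hlin : ConvexOn ℝ (Ici 0) (fun lam : ℝ => -r * lam) :=
    (LinearMap.mulLeft ℝ (-r)).convexOn (convex_Ici 0)
  have hjump := convexOn_integral (convex_Ici 0)
    (fun h => (convexOn_exp_neg_mul_sub_one_add h).subset (subset_univ _) (convex_Ici 0))
    (fun lam hlam => integrableOn_exp_neg_mul_sub_one_add hμ hlam)
  exact (hlin.add ((convexOn_pow 2).smul hγ)).add hjump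

lemma two_sub_two_mul_one (hμ : IntegrableOn (fun h => min h (h ^ 2)) (Ioi 0) μ) :
    branchingMechanism r γ μ 2 - 2 * branchingMechanism r γ μ 1 =
      2 * γ + ∫ h in Ioi (0 : ℝ), (1 - exp (-h)) ^ 2 ∂μ := by
  simp only [branchingMechanism, one_sub_exp_neg_sq,
    integral_sub (integrableOn_exp_neg_mul_sub_one_add hμ zero_le_two)
      ((integrableOn_exp_neg_mul_sub_one_add hμ zero_le_one).const_mul 2), integral_const_mul]
  ring

lemma exists_ne_zero (hγ : 0 ≤ γ) (hμ : IntegrableOn (fun h => min h (h ^ 2)) (Ioi 0) μ)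
    (hsupp : μ (Ioi (0 : ℝ))ᶜ = 0) (hnondeg : ¬ (r = 0 ∧ γ = 0 ∧ μ = 0)) :
    ∃ v, 0 < v ∧ branchingMechanism r γ μ v ≠ 0 := by
  by_contra! hzero
  have hsq_nonneg : 0 ≤ ∫ h in Ioi (0 : ℝ), (1 - exp (-h)) ^ 2 ∂μ :=
    setIntegral_nonneg measurableSet_Ioi fun h _ => sq_nonneg _
  have hsum := two_sub_two_mul_one (r := r) (γ := γ) hμ
  rw [hzero 2 two_pos, hzero 1 one_pos] at hsum
  have hγ0 : γ = 0 := by linarith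
  have hμ0 : μ = 0 := by
    have hsq_int : IntegrableOn (fun h => (1 - exp (-h)) ^ 2) (Ioi 0) μ := by
      simp only [one_sub_exp_neg_sq]
      exact (integrableOn_exp_neg_mul_sub_one_add hμ zero_le_two).sub
        ((integrableOn_exp_neg_mul_sub_one_add hμ zero_le_one).const_mul 2)
    have hpos : ¬ 0 < ∫ h in Ioi (0 : ℝ), (1 - exp (-h)) ^ 2 ∂μ := by linarith
    rw [setIntegral_pos_iff_support_of_nonneg_ae (ae_of_all _ fun h => sq_nonneg _) hsq_int,
      not_lt, nonpos_iff_eq_zero] at hpos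
    have hIoi : μ (Ioi 0) = 0 := by
      refine measure_mono_null (fun h (hh : 0 < h) => mem_inter ?_ hh) hpos
      exact pow_ne_zero 2 (sub_ne_zero.2 (exp_lt_one_iff.2 (neg_lt_zero.2 hh)).ne')
    rw [← Measure.measure_univ_eq_zero, ← union_compl_self (Ioi 0)]
    exact measure_union_null hIoi hsupp
  apply hnondeg ⟨?_, hγ0, hμ0⟩
  simpa [branchingMechanism, hγ0, hμ0] using hzero 1 one_pos

end branchingMechanism

end BranchingMechanism

namespace ConvexOn

variable {f : ℝ → ℝ}

lemma continuousOn_Ioi {a : ℝ} (hf : ConvexOn ℝ (Ici a) f) : ContinuousOn f (Ioi a) := by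
  simpa using hf.continuousOn_interior

lemma div_le_div_of_apply_zero (hf : ConvexOn ℝ (Ici 0) f) (hf0 : f 0 = 0) {v w : ℝ}
    (hv : 0 < v) (hvw : v ≤ w) : f v / v ≤ f w / w := by
  simpa [hf0] using hf.secant_mono self_mem_Ici hv.le (hv.trans_le hvw).le hv.ne'
    (hv.trans_le hvw).ne' hvw

lemma pos_of_pos_of_le (hf : ConvexOn ℝ (Ici 0) f) (hf0 : f 0 = 0) {v w : ℝ}
    (hv : 0 < v) (hfv : 0 < f v) (hvw : v ≤ w) : 0 < f w := by
  have hslope : 0 < f w / w := (div_pos hfv hv).trans_le (hf.div_le_div_of_apply_zero hf0 hv hvw)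
  exact (div_pos_iff_of_pos_right (hv.trans_le hvw)).1 hslope

lemma neg_of_neg_of_le (hf : ConvexOn ℝ (Ici 0) f) (hle : ∀ w, 0 < w → f w ≤ 0) {v w : ℝ}
    (hv : 0 < v) (hfv : f v < 0) (hvw : v ≤ w) : f w < 0 := by
  have hw : 0 < w := hv.trans_le hvw
  refine (hle w hw).lt_of_ne fun hfw => ?_
  have := hf.le_left_of_right_le'' hv.le (mem_Ici.2 (by linarith)) hvw
    (lt_add_one w) (by rw [hfw]; exact hle _ (by linarith))
  linarith

lemma exists_forall_pos_of_integrableOn_inv (hf : ConvexOn ℝ (Ici 0) f) (hf0 : f 0 = 0)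
    (hne : ∃ v, 0 < v ∧ f v ≠ 0) {a : ℝ} (hint : IntegrableOn (fun x => (f x)⁻¹) (Ioi a)) :
    ∃ b, 0 < b ∧ a ≤ b ∧ ∀ w, b ≤ w → 0 < f w := by
  by_cases hpos : ∃ v, 0 < v ∧ 0 < f v
  · obtain ⟨v, hv, hfv⟩ := hpos
    exact ⟨max v a, hv.trans_le (le_max_left _ _), le_max_right _ _,
      fun w hw => hf.pos_of_pos_of_le hf0 hv hfv ((le_max_left _ _).trans hw)⟩
  push Not at hpos
  obtain ⟨v, hv, hfv_ne⟩ := hne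
  have hfv : f v < 0 := (hpos v hv).lt_of_ne hfv_ne
  set b := max v a
  have hb : 0 < b := hv.trans_le (le_max_left _ _)
  have hfb : f b < 0 := hf.neg_of_neg_of_le hpos hv hfv (le_max_left _ _)
  -- convexity makes `-f` grow at most linearly, so `1 / |f|` is at least a multiple of `1 / x`
  have hinv_le : ∀ w ∈ Ioi b, ‖w⁻¹‖ ≤ (-f b / b) * ‖(f w)⁻¹‖ := by
    intro w (hw : b < w)
    have hw0 : 0 < w := hb.trans hw
    have hfw : f w < 0 := hf.neg_of_neg_of_le hpos hb hfb hw.le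
    have hslope := hf.div_le_div_of_apply_zero hf0 hb hw.le
    rw [div_le_div_iff₀ hb hw0] at hslope
    rw [norm_inv, norm_inv, norm_of_nonneg hw0.le, norm_of_nonpos hfw.le, inv_eq_one_div,
      inv_eq_one_div, mul_one_div, div_le_div_iff₀ hw0 (neg_pos.2 hfw), div_mul_eq_mul_div,
      le_div_iff₀ hb]
    linarith
  refine absurd ?_ (not_integrableOn_Ioi_inv (a := b))
  refine ((hint.mono_set (Ioi_subset_Ioi (le_max_right _ _))).norm.const_mul (-f b / b)).mono'
    measurable_inv.aestronglyMeasurable ?_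
  filter_upwards [ae_restrict_mem measurableSet_Ioi] with w hw
  exact hinv_le w hw

end ConvexOn

lemma ContinuousOn.exists_first_hitting {g : ℝ → ℝ} {a b c : ℝ} (hab : a ≤ b)
    (hg : ContinuousOn g (Icc a b)) (hgb : g b ≤ c) (hga : c ≤ g a) :
    ∃ τ ∈ Icc a b, g τ = c ∧ ∀ s ∈ Icc a τ, c ≤ g s := by
  set S := Icc a b ∩ g ⁻¹' {c}
  have hS : IsClosed S := hg.preimage_isClosed_of_isClosed isClosed_Icc isClosed_singleton
  have hSne : S.Nonempty := intermediate_value_Icc' hab hg ⟨hgb, hga⟩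
  have hSbdd : BddBelow S := ⟨a, fun x hx => hx.1.1⟩
  obtain ⟨hτ, hgτ⟩ : sInf S ∈ S := hS.csInf_mem hSne hSbdd
  refine ⟨sInf S, hτ, hgτ, fun s hs => le_of_not_gt fun hgs => ?_⟩
  obtain ⟨r, hr, hgr⟩ := intermediate_value_Icc' hs.1 (hg.mono (Icc_subset_Icc_right
    (hs.2.trans hτ.2))) ⟨hgs.le, hga⟩
  have hτr : sInf S ≤ r := csInf_le hSbdd ⟨⟨hr.1, hr.2.trans (hs.2.trans hτ.2)⟩, hgr⟩
  exact hgs.ne (by rw [le_antisymm hs.2 (hτr.trans hr.2)]; exact hgτ)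

section AutonomousODE

variable {ψ g : ℝ → ℝ} {a b c : ℝ}

lemma integral_inv_eq_sub_of_hasDerivAt_neg {s : Set ℝ} (hψ : ContinuousOn ψ s)
    (hψ0 : ∀ y ∈ s, ψ y ≠ 0) (hab : a ≤ b) (hg : ∀ x ∈ Icc a b, HasDerivAt g (-ψ (g x)) x)
    (hgs : MapsTo g (Icc a b) s) :
    ∫ v in g b..g a, (ψ v)⁻¹ = b - a := by
  rw [← uIcc_of_le hab] at hg hgs
  have hgc : ContinuousOn g (uIcc a b) := fun x hx => (hg x hx).continuousAt.continuousWithinAt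
  have hcov := intervalIntegral.integral_comp_mul_deriv' (g := fun v => (ψ v)⁻¹) hg
    (hψ.comp hgc hgs).neg
    ((hψ.mono (mapsTo_iff_image_subset.1 hgs)).inv₀ fun y hy => hψ0 y
      (mapsTo_iff_image_subset.1 hgs hy))
  have hone : ∫ x in a..b, ((fun v => (ψ v)⁻¹) ∘ g) x * -ψ (g x) = ∫ _ in a..b, (-1 : ℝ) :=
    intervalIntegral.integral_congr fun x hx => by
      simp [inv_mul_cancel₀ (hψ0 _ (hgs hx))]
  rw [intervalIntegral.integral_symm, ← hcov, hone]
  simp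

lemma le_of_hasDerivAt_neg_of_le (hg : ∀ x ∈ Icc a b, HasDerivAt g (-ψ (g x)) x)
    (hψc : 0 < ψ c) (ha : g a ≤ c) : ∀ x ∈ Icc a b, g x ≤ c :=
  image_le_of_deriv_right_lt_deriv_boundary' (fun x hx => (hg x hx).continuousAt.continuousWithinAt)
    (fun x hx => (hg x (Ico_subset_Icc_self hx)).hasDerivWithinAt) ha continuousOn_const
    (fun x _ => hasDerivWithinAt_const x _ c) fun x _ hgx => by rw [hgx]; linarith

lemma exists_lt_pos_of_hasDerivAt_neg (hab : a ≤ b)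
    (hg : ∀ x ∈ Icc a b, HasDerivAt g (-ψ (g x)) x) (hgb : g b ≤ c) (hga : c < g a) :
    ∃ v, c < v ∧ 0 < ψ v := by
  have hgc : ContinuousOn g (Icc a b) := fun x hx => (hg x hx).continuousAt.continuousWithinAt
  obtain ⟨τ, hτ, hgτ, hge⟩ := hgc.exists_first_hitting (c := (c + g a) / 2) hab
    (by linarith) (by linarith)
  have haτ : a < τ := hτ.1.lt_of_ne (by rintro rfl; linarith)
  have hsub : Icc a τ ⊆ Icc a b := Icc_subset_Icc_right hτ.2
  obtain ⟨x, hx, hslope⟩ := exists_hasDerivAt_eq_slope g (fun x => -ψ (g x)) haτ (hgc.mono hsub)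
    fun x hx => hg x (hsub (Ioo_subset_Icc_self hx))
  refine ⟨g x, by linarith [hge x (Ioo_subset_Icc_self hx)], ?_⟩
  have : (g τ - g a) / (τ - a) < 0 := div_neg_of_neg_of_pos (by linarith) (by linarith)
  linarith

lemma integral_inv_le_of_hasDerivAt_neg (hψc : ContinuousOn ψ (Ici c))
    (hψpos : ∀ y, c ≤ y → 0 < ψ y) (hab : a ≤ b) (hg : ∀ x ∈ Icc a b, HasDerivAt g (-ψ (g x)) x)
    (hgb : g b ≤ c) (hga : c ≤ g a) : ∫ v in c..g a, (ψ v)⁻¹ ≤ b - a := by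
  obtain ⟨τ, hτ, hgτ, hge⟩ := ContinuousOn.exists_first_hitting hab
    (fun x hx => (hg x hx).continuousAt.continuousWithinAt) hgb hga
  have := integral_inv_eq_sub_of_hasDerivAt_neg hψc (fun y hy => (hψpos y hy).ne') hτ.1
    (fun x hx => hg x ⟨hx.1, hx.2.trans hτ.2⟩) hge
  rw [hgτ] at this
  linarith [hτ.2]

lemma intervalIntegral_le_setIntegral_Ioi {μ : Measure ℝ} {f : ℝ → ℝ} {x y : ℝ}
    (hf : IntegrableOn f (Ioi c) μ) (hf0 : ∀ v ∈ Ioi c, 0 ≤ f v) (hx : c ≤ x) (hy : c ≤ y) :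
    ∫ v in x..y, f v ∂μ ≤ ∫ v in Ioi c, f v ∂μ := by
  rcases le_total x y with hxy | hyx
  · rw [intervalIntegral.integral_of_le hxy]
    exact setIntegral_mono_set hf (ae_restrict_of_forall_mem measurableSet_Ioi hf0)
      (Ioc_subset_Ioi_self.trans (Ioi_subset_Ioi hx)).eventuallyLE
  · rw [intervalIntegral.integral_of_ge hyx]
    have hyx_nonneg : 0 ≤ ∫ v in Ioc y x, f v ∂μ :=
      setIntegral_nonneg measurableSet_Ioc fun v hv => hf0 v (hy.trans_lt hv.1)
    linarith [setIntegral_nonneg (μ := μ) measurableSet_Ioi hf0]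

lemma le_of_setIntegral_inv_lt (hψc : ContinuousOn ψ (Ici c)) (hψpos : ∀ y, c ≤ y → 0 < ψ y)
    (hint : IntegrableOn (fun x => (ψ x)⁻¹) (Ioi c)) (hab : a ≤ b)
    (hg : ∀ x ∈ Icc a b, HasDerivAt g (-ψ (g x)) x) (hlt : ∫ x in Ioi c, (ψ x)⁻¹ < b - a) :
    g b ≤ c := by
  -- the trajectory spends at most `∫_c^∞ dx / ψ x < b - a` units of time above `c`
  obtain ⟨s, hs, hgs⟩ : ∃ s ∈ Icc a b, g s ≤ c := by
    by_contra! habove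
    have := integral_inv_eq_sub_of_hasDerivAt_neg hψc (fun y hy => (hψpos y hy).ne') hab hg
      fun x hx => (habove x hx).le
    linarith [intervalIntegral_le_setIntegral_Ioi hint
      (fun x hx => (inv_pos.2 (hψpos x (le_of_lt hx))).le) (habove b ⟨hab, le_rfl⟩).le
      (habove a ⟨le_rfl, hab⟩).le]
  exact le_of_hasDerivAt_neg_of_le (fun x hx => hg x ⟨hs.1.trans hx.1, hx.2⟩)
    (hψpos c le_rfl) hgs b ⟨hs.2, le_rfl⟩

end AutonomousODE

section CSBP

variable {ψ : ℝ → ℝ} {u : ℝ → ℝ → ℝ}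

lemma integrableOn_inv_of_bddAbove (hψ : ConvexOn ℝ (Ici 0) ψ) (hψ0 : ψ 0 = 0)
    (hu0 : ∀ lam, 0 ≤ lam → u 0 lam = lam)
    (hode : ∀ lam, 0 ≤ lam → ∀ t, 0 ≤ t → HasDerivAt (fun s => u s lam) (-ψ (u t lam)) t)
    {t : ℝ} (ht : 0 ≤ t) (hbdd : BddAbove (u t '' Ici 0)) :
    ∃ a, 0 < a ∧ IntegrableOn (fun x => (ψ x)⁻¹) (Ioi a) := by
  obtain ⟨M, hM0, hM⟩ := (bddAbove_iff_exists_ge 0).1 hbdd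
  have hut : ∀ lam, 0 ≤ lam → u t lam ≤ M := fun lam hlam => hM _ ⟨lam, hlam, rfl⟩
  have hsol : ∀ lam, 0 ≤ lam → ∀ x ∈ Icc 0 t, HasDerivAt (fun s => u s lam) (-ψ (u x lam)) x :=
    fun lam hlam x hx => hode lam hlam x hx.1
  have hM1 : 0 ≤ M + 1 := by linarith
  obtain ⟨v, hMv, hψv⟩ := exists_lt_pos_of_hasDerivAt_neg ht (hsol _ hM1) (hut _ hM1)
    (by rw [hu0 _ hM1]; linarith)
  have hv : 0 < v := hM0.trans_lt hMv
  have hψpos : ∀ w, v ≤ w → 0 < ψ w := fun w hw => hψ.pos_of_pos_of_le hψ0 hv hψv hw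
  have hψc : ContinuousOn ψ (Ici v) := hψ.continuousOn_Ioi.mono (Ici_subset_Ioi.2 hv)
  have hbound : ∀ lam, v ≤ lam → ∫ x in v..lam, (ψ x)⁻¹ ≤ t := fun lam hlam => by
    have hlam0 : 0 ≤ lam := hv.le.trans hlam
    simpa [hu0 lam hlam0] using integral_inv_le_of_hasDerivAt_neg hψc hψpos ht
      (hsol lam hlam0) ((hut lam hlam0).trans hMv.le) (by rw [hu0 lam hlam0]; exact hlam)
  have hψinv_c : ContinuousOn (fun x => (ψ x)⁻¹) (Ici v) := hψc.inv₀ fun x hx => (hψpos x hx).ne'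
  refine ⟨v, hv, integrableOn_Ioi_of_intervalIntegral_norm_bounded t v
    (fun i => (hψinv_c.mono Icc_subset_Ici_self).integrableOn_Icc.mono_set Ioc_subset_Icc_self)
    tendsto_id ?_⟩
  filter_upwards [eventually_ge_atTop v] with lam hlam
  rw [intervalIntegral.integral_congr fun x hx => norm_of_nonneg
    (inv_nonneg.2 (hψpos x (uIcc_of_le hlam ▸ hx).1).le)]
  exact hbound lam hlam

lemma exists_forall_le_of_integrableOn_inv {b : ℝ} (hψc : ContinuousOn ψ (Ici b))
    (hψpos : ∀ w, b ≤ w → 0 < ψ w) (hint : IntegrableOn (fun x => (ψ x)⁻¹) (Ioi b))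
    (hode : ∀ lam, 0 ≤ lam → ∀ t, 0 ≤ t → HasDerivAt (fun s => u s lam) (-ψ (u t lam)) t) :
    ∃ t, 0 < t ∧ ∀ lam, 0 ≤ lam → u t lam ≤ b := by
  have hC : 0 ≤ ∫ x in Ioi b, (ψ x)⁻¹ :=
    setIntegral_nonneg measurableSet_Ioi fun x hx => (inv_pos.2 (hψpos x (le_of_lt hx))).le
  refine ⟨(∫ x in Ioi b, (ψ x)⁻¹) + 1, by linarith, fun lam hlam => ?_⟩
  exact le_of_setIntegral_inv_lt (g := fun s => u s lam) (a := 0) hψc hψpos hint (by linarith)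
    (fun x hx => hode lam hlam x hx.1) (by linarith)

end CSBP

lemma tendsto_exp_neg_nat_mul {x : ℝ} (hx : 0 < x) :
    Tendsto (fun n : ℕ => exp (-n * x)) atTop (𝓝 0) := by
  simp only [neg_mul]
  exact tendsto_exp_atBot.comp (tendsto_neg_atTop_atBot.comp
    (tendsto_natCast_atTop_atTop.atTop_mul_const hx))

lemma pos_iff_bddAbove_of_tendsto_exp {f : ℝ → ℝ} (hf : MonotoneOn f (Ici 0)) {z p : ℝ}
    (hz : 0 < z) (hlim : Tendsto (fun n : ℕ => exp (-z * f n)) atTop (𝓝 p)) :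
    0 < p ↔ BddAbove (f '' Ici 0) := by
  constructor
  · intro hp
    obtain ⟨N, hN⟩ := (hlim.eventually (lt_mem_nhds (half_lt_self hp))).exists_forall_of_atTop
    refine ⟨-log (p / 2) / z, ?_⟩
    rintro _ ⟨lam, hlam, rfl⟩
    obtain ⟨n, hn⟩ := exists_nat_ge (max lam N)
    have hNn : N ≤ n := by exact_mod_cast (le_max_right _ _).trans hn
    have hlog := (log_lt_iff_lt_exp (by positivity)).2 (hN n hNn)
    rw [le_div_iff₀ hz]
    nlinarith [hf hlam (show (0 : ℝ) ≤ n by positivity) ((le_max_left _ _).trans hn)]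
  · rintro ⟨M, hM⟩
    refine (exp_pos (-z * M)).trans_le (ge_of_tendsto' hlim fun n => exp_le_exp.2 ?_)
    nlinarith [hM ⟨n, mem_Ici.2 n.cast_nonneg, rfl⟩]

section Probability

variable {Ω : Type*} [MeasurableSpace Ω] {μ : Measure Ω} {X : Ω → ℝ}

lemma tendsto_integral_exp_neg_nat_mul [IsFiniteMeasure μ] (hX : ∀ ω, 0 ≤ X ω)
    (hXm : AEMeasurable X μ) :
    Tendsto (fun n : ℕ => ∫ ω, exp (-n * X ω) ∂μ) atTop (𝓝 (μ.real {ω | X ω = 0})) := by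
  have hlim : ∀ ω, Tendsto (fun n : ℕ => exp (-n * X ω)) atTop
      (𝓝 ({ω | X ω = 0}.indicator 1 ω)) := by
    intro ω
    rcases (hX ω).eq_or_lt with h | h
    · simp [← h]
    · rw [indicator_of_notMem (show ω ∉ {ω | X ω = 0} from h.ne')]
      exact tendsto_exp_neg_nat_mul h
  have hdom := tendsto_integral_of_dominated_convergence (F := fun (n : ℕ) ω => exp (-n * X ω))
    (fun _ => 1)
    (fun n => (measurable_exp.comp_aemeasurable (hXm.const_mul (-n))).aestronglyMeasurable)
    (integrable_const 1) (fun n => ae_of_all _ fun ω => by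
      rw [norm_of_nonneg (exp_pos _).le, exp_le_one_iff]
      nlinarith [hX ω, (Nat.cast_nonneg n : (0 : ℝ) ≤ n)]) (ae_of_all _ hlim)
  have hnull : NullMeasurableSet {ω | X ω = 0} μ := hXm.nullMeasurable (measurableSet_singleton 0)
  rwa [integral_indicator₀ hnull, Pi.one_def, setIntegral_const, smul_eq_mul, mul_one] at hdom

def HasLaplaceExponent (μ : Measure Ω) (X : Ω → ℝ) (z : ℝ) (U : ℝ → ℝ) : Prop :=
  ∀ lam, 0 ≤ lam → ∫ ω, exp (-lam * X ω) ∂μ = exp (-z * U lam)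

namespace HasLaplaceExponent

variable {z : ℝ} {U : ℝ → ℝ}

lemma integrable (hLap : HasLaplaceExponent μ X z U) {lam : ℝ} (hlam : 0 ≤ lam) :
    Integrable (fun ω => exp (-lam * X ω)) μ :=
  Integrable.of_integral_ne_zero (by rw [hLap lam hlam]; exact (exp_pos _).ne')

lemma aemeasurable (hLap : HasLaplaceExponent μ X z U) : AEMeasurable X μ :=
  (hLap.integrable zero_le_one).aemeasurable.log.neg.congr (ae_of_all _ fun ω => by simp)

lemma monotoneOn (hLap : HasLaplaceExponent μ X z U) (hX : ∀ ω, 0 ≤ X ω) (hz : 0 < z) :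
    MonotoneOn U (Ici 0) := by
  intro lam hlam lam' hlam' hle
  have hint : ∫ ω, exp (-lam' * X ω) ∂μ ≤ ∫ ω, exp (-lam * X ω) ∂μ :=
    integral_mono (hLap.integrable hlam') (hLap.integrable hlam) fun ω =>
      exp_le_exp.2 (by nlinarith [hX ω])
  rw [hLap lam hlam, hLap lam' hlam', exp_le_exp] at hint
  nlinarith

lemma measure_pos_iff_bddAbove [IsFiniteMeasure μ] (hLap : HasLaplaceExponent μ X z U)
    (hX : ∀ ω, 0 ≤ X ω) (hz : 0 < z) : 0 < μ {ω | X ω = 0} ↔ BddAbove (U '' Ici 0) := by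
  have hlim := tendsto_integral_exp_neg_nat_mul hX hLap.aemeasurable
  simp only [hLap _ (Nat.cast_nonneg _)] at hlim
  rw [← pos_iff_bddAbove_of_tendsto_exp (hLap.monotoneOn hX hz) hz hlim, measureReal_def,
    ENNReal.toReal_pos_iff, and_iff_left (measure_lt_top _ _)]

end HasLaplaceExponent

lemma exists_measure_pos_of_absorbing {Z : ℝ → Ω → ℝ}
    (habs : ∀ᵐ ω ∂μ, ∀ s t, 0 ≤ s → s ≤ t → Z s ω = 0 → Z t ω = 0)
    (hpos : 0 < μ {ω | ∃ t, 0 < t ∧ Z t ω = 0}) : ∃ t, 0 < t ∧ 0 < μ {ω | Z t ω = 0} := by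
  by_contra! hnull
  refine hpos.ne' (measure_mono_null_ae ?_ (measure_iUnion_null fun n : ℕ =>
    nonpos_iff_eq_zero.1 (hnull (n + 1) n.cast_add_one_pos)))
  filter_upwards [habs] with ω hω ⟨t, ht, hZt⟩
  obtain ⟨n, hn⟩ := exists_nat_ge t
  exact mem_iUnion.2 ⟨n, hω t (n + 1) ht.le (by linarith) hZt⟩

end Probability

/-- a nondegenerate CSBP `Z` with branching mechanism `ψ`
(encoded through the family of laws `P z`, Laplace exponent `u` solving
`∂_t u_t(λ) = −ψ(u_t(λ))`, `u_0(λ) = λ`, with `E_z e^{−λZ_t} = e^{−z u_t(λ)}`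
and `0` absorbing) is absorbed at `0` in finite time with positive
probability, i.e. `P(∃ t > 0, Z_t = 0) > 0`, if and only if
`∫^∞ dx/ψ(x) < ∞` (i.e. `1/ψ` is integrable on a neighborhood of `+∞`). -/
theorem csbp_absorption_iff_integrable_inverse_psi
    {Ω : Type*} [MeasurableSpace Ω]
    (r γ : ℝ) (hγ : 0 ≤ γ) (μjump : Measure ℝ)
    (hsupp : μjump (Set.Ioi (0 : ℝ))ᶜ = 0)
    (hmom : (∫⁻ h in Set.Ioi (0 : ℝ), ENNReal.ofReal (min h (h ^ 2)) ∂μjump) ≠ ⊤)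
    (hnondeg : ¬ (r = 0 ∧ γ = 0 ∧ μjump = 0))
    (ψ : ℝ → ℝ)
    (hψ : ∀ lam, ψ lam =
      -r * lam + γ * lam ^ 2 +
        ∫ h in Set.Ioi (0 : ℝ), (Real.exp (-lam * h) - 1 + lam * h) ∂μjump)
    (P : ℝ → Measure Ω) (hP : ∀ z, 0 ≤ z → IsProbabilityMeasure (P z))
    (Z : ℝ → Ω → ℝ) (hZpos : ∀ t ω, 0 ≤ Z t ω)
    (habsorbing : ∀ z, 0 ≤ z → ∀ᵐ ω ∂(P z),
      ∀ s t, 0 ≤ s → s ≤ t → Z s ω = 0 → Z t ω = 0)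
    (u : ℝ → ℝ → ℝ)
    (hu0 : ∀ lam, 0 ≤ lam → u 0 lam = lam)
    (huode : ∀ lam, 0 ≤ lam → ∀ t, 0 ≤ t →
      HasDerivAt (fun s => u s lam) (-ψ (u t lam)) t)
    (hLap : ∀ z, 0 ≤ z → ∀ t, 0 ≤ t → ∀ lam, 0 ≤ lam →
      ∫ ω, Real.exp (-lam * Z t ω) ∂(P z) = Real.exp (-z * u t lam)) :
    ∀ z, 0 < z →
      (0 < P z {ω | ∃ t, 0 < t ∧ Z t ω = 0} ↔
        ∃ a, 0 < a ∧ IntegrableOn (fun x => (ψ x)⁻¹) (Set.Ioi a)) := by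
  intro z hz
  obtain rfl : ψ = branchingMechanism r γ μjump := funext hψ
  have hμ := integrableOn_min_sq_of_lintegral_ne_top hmom
  have hconv := branchingMechanism.convexOn (r := r) hγ hμ
  have := hP z hz.le
  have hextinct : ∀ t, 0 ≤ t → (0 < P z {ω | Z t ω = 0} ↔ BddAbove (u t '' Ici 0)) :=
    fun t ht => HasLaplaceExponent.measure_pos_iff_bddAbove (hLap z hz.le t ht) (hZpos t) hz
  constructor
  · intro hpos
    obtain ⟨t, ht, hZt⟩ := exists_measure_pos_of_absorbing (habsorbing z hz.le) hpos
    exact integrableOn_inv_of_bddAbove hconv branchingMechanism.apply_zero hu0 huode ht.le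
      ((hextinct t ht.le).1 hZt)
  · rintro ⟨a, -, hint⟩
    obtain ⟨b, hb, hab, hpos⟩ := hconv.exists_forall_pos_of_integrableOn_inv
      branchingMechanism.apply_zero (branchingMechanism.exists_ne_zero hγ hμ hsupp hnondeg) hint
    obtain ⟨t, ht, hle⟩ := exists_forall_le_of_integrableOn_inv
      (hconv.continuousOn_Ioi.mono (Ici_subset_Ioi.2 hb)) hpos
      (hint.mono_set (Ioi_subset_Ioi hab)) huode
    refine ((hextinct t ht.le).2 ⟨b, ?_⟩).trans_le (measure_mono fun ω hω => ⟨t, ht, hω⟩)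
    rintro _ ⟨lam, hlam, rfl⟩
    exact hle lam hlam
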